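/- arXiv:1210.7862 — 4 statements merged into one kernel-verified Lean document; each statement's English description precedes it below -/
import Mathlib

section
/- Let s ∈ ℂ with sinh s ≠ 0, let a, b ∈ ℂ, and define u : ℝ → ℂ by u(x) = a·e^{sx} + b·e^{−sx} and v : ℝ → ℂ by v(x) = u′(x)/s. Then (1/sinh s)·[[cosh s, −1], [−1, cosh s]] · [u(0), u(1)]ᵀ = [−v(0), v(1)]ᵀ. -/
/-!
Differentiating gives `v x = a e^{sx} - b e^{-sx}`, so the Dirichlet data is
`(a + b, a e^s + b e^{-s})` and the Neumann data is `(b - a, a e^s - b e^{-s})`. Writing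
`e^{±s} = cosh s ± sinh s`, the first row is linear in `a, b` and the second row reduces to
`cosh² s - sinh² s = 1`.
-/

open Matrix Complex

lemma hasDerivAt_exp_mul_ofReal (s : ℂ) (x : ℝ) :
    HasDerivAt (fun x : ℝ => exp (s * x)) (s * exp (s * x)) x := by
  have hlin : HasDerivAt (fun z : ℂ => s * z) s x := by
    simpa using (hasDerivAt_id (x : ℂ)).const_mul s
  simpa [mul_comm] using (hlin.cexp).comp_ofReal

lemma hasDerivAt_exp_combination (s a b : ℂ) (x : ℝ) :
    HasDerivAt (fun x : ℝ => a * exp (s * x) + b * exp (-s * x))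
      (s * (a * exp (s * x) - b * exp (-s * x))) x :=
  (((hasDerivAt_exp_mul_ofReal s x).const_mul a).add
    ((hasDerivAt_exp_mul_ofReal (-s) x).const_mul b)).congr_deriv (by ring)

lemma dtn_matrix_mulVec_exp_combination (s a b : ℂ) (hs : sinh s ≠ 0) :
    ((1 / sinh s) • !![cosh s, -1; -1, cosh s]) *ᵥ ![a + b, a * exp s + b * exp (-s)]
      = ![-(a - b), a * exp s - b * exp (-s)] := by
  rw [smul_mulVec, cons_mulVec, cons_mulVec, empty_mulVec, vec2_dotProduct', vec2_dotProduct',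
    smul_vec2, smul_eq_mul, smul_eq_mul, ← cosh_add_sinh s, ← cosh_sub_sinh s]
  apply vec2_eq
  · field_simp
    ring
  · field_simp
    linear_combination (a + b) * cosh_sq_sub_sinh_sq s

/-- For `u(x) = a·e^{sx} + b·e^{-sx}` and `v = u'/s`, the two-sided DtN matrix
`(1/sinh s)·[[cosh s, -1], [-1, cosh s]]` maps the Dirichlet data `(u(0), u(1))`
to the Neumann data `(-v(0), v(1))`. -/
theorem continuum_DtN_map (s : ℂ) (hs : Complex.sinh s ≠ 0) (a b : ℂ)
    (u v : ℝ → ℂ)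
    (hu : ∀ x : ℝ, u x = a * Complex.exp (s * x) + b * Complex.exp (-s * x))
    (hv : ∀ x : ℝ, v x = deriv u x / s) :
    ((1 / Complex.sinh s) • !![Complex.cosh s, -1; -1, Complex.cosh s]) *ᵥ ![u 0, u 1]
      = ![-v 0, v 1] := by
  have hs0 : s ≠ 0 := by rintro rfl; simp at hs
  have hv_exp : ∀ x : ℝ, v x = a * exp (s * x) - b * exp (-s * x) := fun x => by
    rw [hv, funext hu, (hasDerivAt_exp_combination s a b x).deriv, mul_div_cancel_left₀ _ hs0]
  simp only [hu, hv_exp, ofReal_zero, ofReal_one, mul_zero, mul_one, exp_zero]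
  exact dtn_matrix_mulVec_exp_combination s a b hs
end

section
/- For every s ∈ ℂ with sinh s ≠ 0, one has the matrix identity (1/sinh s)·[[cosh s, −1], [−1, cosh s]] = Z · [[tanh(s/2), 0], [0, coth(s/2)]] · Zᵀ, where Z is the 2×2 complex matrix (1/√2)·[[1, −1], [1, 1]]. (Note sinh s ≠ 0 guarantees sinh(s/2) ≠ 0 and cosh(s/2) ≠ 0, so tanh(s/2) and coth(s/2) are defined and nonzero.) -/
open Matrix

theorem Matrix.smul_conj_diagonal_fin_two {R : Type*} [CommRing R] (c a b : R) :
    (c • !![1, -1; 1, 1]) * !![a, 0; 0, b] * (c • !![1, -1; 1, 1])ᵀ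
      = c ^ 2 • !![a + b, a - b; a - b, a + b] := by
  ext i j
  fin_cases i <;> fin_cases j <;> simp [Matrix.mul_apply, Fin.sum_univ_two] <;> ring

namespace Complex

variable {x : ℂ} (hx : sinh (2 * x) ≠ 0)
include hx

theorem sinh_ne_zero_and_cosh_ne_zero_of_sinh_two_mul_ne_zero : sinh x ≠ 0 ∧ cosh x ≠ 0 := by
  rw [sinh_two_mul] at hx
  simpa using hx

theorem tanh_add_coth_eq : tanh x + cosh x / sinh x = 2 * (cosh (2 * x) / sinh (2 * x)) := by
  obtain ⟨hsh, hch⟩ := sinh_ne_zero_and_cosh_ne_zero_of_sinh_two_mul_ne_zero hx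
  rw [tanh_eq_sinh_div_cosh, sinh_two_mul, cosh_two_mul]
  field_simp
  ring

theorem tanh_sub_coth_eq : tanh x - cosh x / sinh x = 2 * (-1 / sinh (2 * x)) := by
  obtain ⟨hsh, hch⟩ := sinh_ne_zero_and_cosh_ne_zero_of_sinh_two_mul_ne_zero hx
  rw [tanh_eq_sinh_div_cosh, sinh_two_mul]
  field_simp
  linear_combination -cosh_sq_sub_sinh_sq x

end Complex

/-- Diagonalization of the continuum two-sided DtN matrix:
`(1/sinh s)·[[cosh s, -1], [-1, cosh s]] = Z·diag(tanh(s/2), coth(s/2))·Zᵀ`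
with `Z = (1/√2)·[[1, -1], [1, 1]]`. -/
theorem continuum_DtN_diagonalization (s : ℂ) (hs : Complex.sinh s ≠ 0) :
    (1 / Complex.sinh s) • !![Complex.cosh s, -1; -1, Complex.cosh s]
      = ((1 / (Real.sqrt 2 : ℂ)) • !![1, -1; 1, 1]) *
        !![Complex.tanh (s / 2), 0; 0, Complex.cosh (s / 2) / Complex.sinh (s / 2)] *
        ((1 / (Real.sqrt 2 : ℂ)) • !![1, -1; 1, 1])ᵀ := by
  have hdouble : 2 * (s / 2) = s := mul_div_cancel₀ s two_ne_zero
  have hs' : Complex.sinh (2 * (s / 2)) ≠ 0 := by rwa [hdouble]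
  have hsqrt : (1 / (Real.sqrt 2 : ℂ)) ^ 2 = 1 / 2 := by
    rw [div_pow, one_pow, ← Complex.ofReal_pow, Real.sq_sqrt zero_le_two, Complex.ofReal_ofNat]
  rw [Matrix.smul_conj_diagonal_fin_two, hsqrt, Complex.tanh_add_coth_eq hs',
    Complex.tanh_sub_coth_eq hs', hdouble]
  ext i j
  fin_cases i <;> fin_cases j <;> simp <;> ring
end

section
/- Let n ∈ ℕ, s ∈ ℂ, and l₁, …, l_n ∈ ℂ with 1 − l_i s/2 ≠ 0 and 1 + l_i s/2 ≠ 0 for all i. Suppose complex sequences (u_j)_{j=1}^{n+1}, (v_j)_{j=1}^{n+1} satisfy u_{i+1} − u_i = l_i s (v_{i+1} + v_i)/2 and v_{i+1} − v_i = l_i s (u_{i+1} + u_i)/2 for i = 1, …, n. If v₁ = u₁, then v_j = u_j for all j = 1, …, n+1; and if v₁ = −u₁, then v_j = −u_j for all j = 1, …, n+1. -/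
/-- Fixed point property of the discrete Crank–Nicolson propagator: if `v₁ = ±u₁`,
then `v_j = ±u_j` for all `j = 1, …, n+1`. -/
theorem crank_nicolson_fixed_point (n : ℕ) (s : ℂ) (l : ℕ → ℂ)
    (hl : ∀ i, 1 ≤ i → i ≤ n → 1 - l i * s / 2 ≠ 0 ∧ 1 + l i * s / 2 ≠ 0)
    (u v : ℕ → ℂ)
    (hu : ∀ i, 1 ≤ i → i ≤ n → u (i + 1) - u i = l i * s * (v (i + 1) + v i) / 2)
    (hv : ∀ i, 1 ≤ i → i ≤ n → v (i + 1) - v i = l i * s * (u (i + 1) + u i) / 2) :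
    (v 1 = u 1 → ∀ j, 1 ≤ j → j ≤ n + 1 → v j = u j) ∧
    (v 1 = -u 1 → ∀ j, 1 ≤ j → j ≤ n + 1 → v j = -u j) := by
  constructor
  · intro h1
    intro j hj1
    induction j, hj1 using Nat.le_induction with
    | base => intro _; exact h1
    | succ i hi ih =>
      intro hin
      have hin' : i ≤ n := by omega
      have ihv : v i = u i := ih (by omega)
      have h1 := hu i hi hin'
      have h2 := hv i hi hin'
      have key : (1 + l i * s / 2) * (v (i+1) - u (i+1)) =
          (1 - l i * s / 2) * (v i - u i) := by linear_combination h2 - h1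
      rw [ihv, sub_self, mul_zero] at key
      have := (hl i hi hin').2
      have : v (i+1) - u (i+1) = 0 := by
        rcases mul_eq_zero.mp key with h | h
        · exact absurd h this
        · exact h
      exact sub_eq_zero.mp this
  · intro h1
    intro j hj1
    induction j, hj1 using Nat.le_induction with
    | base => intro _; exact h1
    | succ i hi ih =>
      intro hin
      have hin' : i ≤ n := by omega
      have ihv : v i = -u i := ih (by omega)
      have h1 := hu i hi hin'
      have h2 := hv i hi hin'
      have key : (1 - l i * s / 2) * (v (i+1) + u (i+1)) =
          (1 + l i * s / 2) * (v i + u i) := by linear_combination h1 + h2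
      rw [ihv, neg_add_cancel, mul_zero] at key
      have hnz := (hl i hi hin').1
      have : v (i+1) + u (i+1) = 0 := by
        rcases mul_eq_zero.mp key with h | h
        · exact absurd h hnz
        · exact h
      exact eq_neg_of_add_eq_zero_left this
end

section
/- Let n ∈ ℕ, s ∈ ℂ, and l₁, …, l_n ∈ ℂ with 1 − l_i s/2 ≠ 0 and 1 + l_i s/2 ≠ 0 for all i, and define the polynomial t(s) = ∏_{i=1}^{n} (1 − l_i s/2). Suppose complex sequences (u_j)_{j=1}^{n+1}, (v_j)_{j=1}^{n+1} satisfy u_{i+1} − u_i = l_i s (v_{i+1} + v_i)/2 and v_{i+1} − v_i = l_i s (u_{i+1} + u_i)/2 for i = 1, …, n, with u₁ = v₁ = 1. Then u_{n+1} = v_{n+1} = t(−s)/t(s). -/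
open Finset

/-- The Crank–Nicolson scheme started from `u₁ = v₁ = 1` approximates the exponential
`e^s` by the rational function `t(-s)/t(s)` with `t(s) = ∏_{i=1}^n (1 - l_i s/2)`:
the terminal values satisfy `u_{n+1} = v_{n+1} = t(-s)/t(s)`. -/
theorem crank_nicolson_discrete_exponential (n : ℕ) (s : ℂ) (l : ℕ → ℂ)
    (hl : ∀ i, 1 ≤ i → i ≤ n → 1 - l i * s / 2 ≠ 0 ∧ 1 + l i * s / 2 ≠ 0)
    (t : ℂ → ℂ) (ht : ∀ z : ℂ, t z = ∏ i ∈ Finset.Icc 1 n, (1 - l i * z / 2))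
    (u v : ℕ → ℂ)
    (hu : ∀ i, 1 ≤ i → i ≤ n → u (i + 1) - u i = l i * s * (v (i + 1) + v i) / 2)
    (hv : ∀ i, 1 ≤ i → i ≤ n → v (i + 1) - v i = l i * s * (u (i + 1) + u i) / 2)
    (hu1 : u 1 = 1) (hv1 : v 1 = 1) :
    u (n + 1) = t (-s) / t s ∧ v (n + 1) = t (-s) / t s := by
  have key : ∀ k, k ≤ n →
      u (k+1) = ∏ i ∈ Finset.Icc 1 k, ((1 + l i * s / 2) / (1 - l i * s / 2)) ∧
      v (k+1) = ∏ i ∈ Finset.Icc 1 k, ((1 + l i * s / 2) / (1 - l i * s / 2)) := by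
    intro k
    induction k with
    | zero => intro _; simp [hu1, hv1]
    | succ k ih =>
      intro hk
      obtain ⟨hu0, hv0⟩ := ih (Nat.le_of_succ_le hk)
      have h1 : 1 ≤ k + 1 := Nat.succ_le_succ (Nat.zero_le k)
      obtain ⟨hd, hd'⟩ := hl (k+1) h1 hk
      have e1 := hu (k+1) h1 hk
      have e2 := hv (k+1) h1 hk
      have huv : u (k+1) = v (k+1) := hu0.trans hv0.symm
      have heq : u (k+2) = v (k+2) := by
        have h : (u (k+2) - v (k+2)) * (1 + l (k+1) * s / 2)
            = (u (k+1) - v (k+1)) * (1 - l (k+1) * s / 2) := by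
          linear_combination e1 - e2
        rw [huv, sub_self, zero_mul] at h
        rcases mul_eq_zero.mp h with h' | h'
        · exact sub_eq_zero.mp h'
        · exact absurd h' hd'
      have hval : u (k+2) * (1 - l (k+1) * s / 2)
          = u (k+1) * (1 + l (k+1) * s / 2) := by
        linear_combination (e1 + e2)/2 + ((1 - l (k+1)*s/2)/2) * heq
          - ((1 + l (k+1)*s/2)/2) * huv
      have hstep : u (k+2) = u (k+1) * ((1 + l (k+1) * s / 2) / (1 - l (k+1) * s / 2)) := by
        rw [← mul_div_assoc, eq_div_iff hd, hval]
      have hprod : u (k+2) = ∏ i ∈ Finset.Icc 1 (k+1),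
          ((1 + l i * s / 2) / (1 - l i * s / 2)) := by
        rw [Finset.prod_Icc_succ_top h1, hstep, hu0]
      exact ⟨hprod, heq ▸ hprod⟩
  obtain ⟨h1, h2⟩ := key n le_rfl
  have hts : t (-s) / t s = ∏ i ∈ Finset.Icc 1 n, ((1 + l i * s / 2) / (1 - l i * s / 2)) := by
    rw [ht, ht, ← Finset.prod_div_distrib]
    refine Finset.prod_congr rfl fun i _ => ?_
    ring_nf
  exact ⟨h1.trans hts.symm, h2.trans hts.symm⟩
end
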